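/- The sequence (a_{2;10}(n))_{n≥0} has no prefix of the form vv except v = 0 and v = 00; consequently it is not purely morphic. -/

import Mathlib

/-!
Appending a binary digit `d` to the expansion of `n ≠ 0` creates a new factor `10` exactly when
`n` is odd and `d = 0`, so `a(2n+1) = a(n)` and `a(2n) = a(n) + n mod 2`. A square prefix `vv`
with `|v| = k ≥ 2` says `a(n) = a(n+k)` for `n < k`; this is refuted by strong induction on `k`
from these two recursions and the values `a(0..4) = 0,0,1,0,1`. A fixed point of a morphism `φ`
with `a(0) = a(1)` begins with the square `φ(a 0) φ(a 0)`, of length at least `4`.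
-/

/-- Number of occurrences of the word `w` as a factor of the word `x`. -/
def occCount (w x : List ℕ) : ℕ :=
  (List.range (x.length + 1)).countP (fun i => decide (w <+: x.drop i))

/-- Base-`m` expansion of `n`, most significant digit first, with `0` written as the digit `0`. -/
def baseExp (m n : ℕ) : List ℕ :=
  if n = 0 then [0] else (Nat.digits m n).reverse

/-- `e_{m;w}(n)`: number of occurrences of `w` in the base-`m` expansion of `n`. -/
def eCount (m : ℕ) (w : List ℕ) (n : ℕ) : ℕ := occCount w (baseExp m n)

/-- `a_{m;w}(n) = e_{m;w}(n) mod m`. -/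
def aSeq (m : ℕ) (w : List ℕ) (n : ℕ) : ℕ := eCount m w n % m

/-- The value `(w)_m` of the digit string `w` in base `m`. -/
def wordVal (m : ℕ) (w : List ℕ) : ℕ := w.foldl (fun acc d => acc * m + d) 0

/-- The finite word `v` is a prefix of the infinite sequence `s`. -/
def IsPrefixSeq (v : List ℕ) (s : ℕ → ℕ) : Prop := ∀ n < v.length, s n = v.getD n 0

/-- Length of the image under the morphism `φ` of the first `n` letters of `s`. -/
def morphPrefixLen (φ : ℕ → List ℕ) (s : ℕ → ℕ) (n : ℕ) : ℕ :=
  (Finset.range n).sum fun j => (φ (s j)).length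

/-- The infinite sequence `s` is a fixed point of the morphism `φ` (extended by
concatenation to infinite words). -/
def IsMorphFixedPoint (φ : ℕ → List ℕ) (s : ℕ → ℕ) : Prop :=
  ∀ n : ℕ, ∀ i < (φ (s n)).length,
    s (morphPrefixLen φ s n + i) = (φ (s n)).getD i 0

/-- The sequence `s` over the alphabet `{0,...,p-1}` is purely morphic: it is a fixed
point of a non-erasing morphism of `{0,...,p-1}*`, prolongable on the first letter. -/
def PurelyMorphic (p : ℕ) (s : ℕ → ℕ) : Prop :=
  ∃ φ : ℕ → List ℕ,
    (∀ c < p, φ c ≠ [] ∧ ∀ d ∈ φ c, d < p) ∧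
    2 ≤ (φ (s 0)).length ∧
    IsMorphFixedPoint φ s

theorem occCount_nil (w : List ℕ) : occCount w [] = if w = [] then 1 else 0 := by
  simp [occCount]

theorem occCount_cons (w : List ℕ) (a : ℕ) (t : List ℕ) :
    occCount w (a :: t) = (if w <+: a :: t then 1 else 0) + occCount w t := by
  rw [occCount, List.length_cons, List.range_succ_eq_map, List.countP_cons, List.countP_map]
  by_cases h : w <+: a :: t <;> simp [h, occCount, Function.comp_def, add_comm]

theorem occCount_append_singleton (w l : List ℕ) (c : ℕ) :
    occCount w (l ++ [c]) = occCount w l + if w <:+ l ++ [c] then 1 else 0 := by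
  induction l with
  | nil =>
    have h := List.prefix_concat_iff (l₁ := w) (l₂ := []) (a := c)
    simp only [List.nil_append, List.prefix_nil] at h
    simp only [List.nil_append, occCount_cons, occCount_nil, h, List.suffix_cons_iff,
      List.suffix_nil]
    split_ifs <;> simp_all
  | cons a l ih =>
    have hpre : w <+: a :: l ++ [c] ↔ w = a :: l ++ [c] ∨ w <+: a :: l := List.prefix_concat_iff
    have hsuf : w <:+ a :: l ++ [c] ↔ w = a :: l ++ [c] ∨ w <:+ l ++ [c] := List.suffix_cons_iff
    rw [List.cons_append, occCount_cons, occCount_cons, ih, ← List.cons_append]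
    simp only [hpre, hsuf]
    by_cases hw : w = a :: l ++ [c]
    · have hshort : ¬ w <+: a :: l ∧ ¬ w <:+ l ++ [c] := by
        subst hw
        exact ⟨fun h => by simpa using h.length_le, fun h => by simpa using h.length_le⟩
      rw [if_pos (Or.inl hw), if_pos (Or.inl hw), if_neg hshort.1, if_neg hshort.2]
      omega
    · simp only [hw, false_or]
      omega

theorem baseExp_mul_add {m n d : ℕ} (hm : 1 < m) (hn : n ≠ 0) (hd : d < m) :
    baseExp m (m * n + d) = baseExp m n ++ [d] := by
  rw [baseExp, baseExp, if_neg (by positivity), if_neg hn, add_comm,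
    Nat.digits_add m hm d n hd (Or.inr hn), List.reverse_cons]

theorem getLast?_baseExp {m : ℕ} (hm : 1 < m) (n : ℕ) :
    (baseExp m n).getLast? = some (n % m) := by
  rcases eq_or_ne n 0 with rfl | hn
  · simp [baseExp]
  · rw [baseExp, if_neg hn, Nat.digits_def' hm (Nat.pos_of_ne_zero hn)]
    simp

theorem eCount_mul_add {m n d : ℕ} (hm : 1 < m) (hn : n ≠ 0) (hd : d < m) (a b : ℕ) :
    eCount m [a, b] (m * n + d) = eCount m [a, b] n + if n % m = a ∧ b = d then 1 else 0 := by
  have hsuf : [a, b] <:+ baseExp m n ++ [d] ↔ n % m = a ∧ b = d := by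
    rw [show [a, b] = [a] ++ [b] from rfl,
      List.suffix_append_inj_of_length_eq (s₁ := [b]) (s₂ := [d]) rfl,
      List.singleton_suffix_iff_getLast?_eq_some, getLast?_baseExp hm]
    simp
  rw [eCount, eCount, baseExp_mul_add hm hn hd, occCount_append_singleton]
  simp only [hsuf]

theorem aSeq_two_ten_odd (n : ℕ) : aSeq 2 [1, 0] (2 * n + 1) = aSeq 2 [1, 0] n := by
  rcases eq_or_ne n 0 with rfl | hn
  · decide
  · simp [aSeq, eCount_mul_add one_lt_two hn one_lt_two]

theorem aSeq_two_ten_even (n : ℕ) : aSeq 2 [1, 0] (2 * n) = (aSeq 2 [1, 0] n + n) % 2 := by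
  rcases eq_or_ne n 0 with rfl | hn
  · decide
  · have hrec := eCount_mul_add one_lt_two hn two_pos 1 0
    rw [add_zero] at hrec
    rw [aSeq, aSeq, hrec]
    rcases Nat.mod_two_eq_zero_or_one n with h | h <;> simp [h, Nat.add_mod]

theorem aSeq_two_ten_not_periodic_prefix (k : ℕ) (hk : 2 ≤ k) :
    ¬ ∀ n < k, aSeq 2 [1, 0] n = aSeq 2 [1, 0] (n + k) := by
  induction k using Nat.strong_induction_on with
  | _ k ih =>
  intro hper
  obtain ⟨m, rfl | rfl⟩ := Nat.even_or_odd' k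
  · obtain rfl | hm : m = 1 ∨ 2 ≤ m := by omega
    · exact absurd (hper 0 (by omega)) (by decide)
    · -- position `2n + 1` carries `a n`, so the period `2m` of the prefix halves to `m`
      refine ih m (by omega) hm fun n hn => ?_
      have h := hper (2 * n + 1) (by omega)
      rwa [show 2 * n + 1 + 2 * m = 2 * (n + m) + 1 by ring, aSeq_two_ten_odd,
        aSeq_two_ten_odd] at h
  · obtain rfl | hm : m = 1 ∨ 2 ≤ m := by omega
    · exact absurd (hper 1 (by omega)) (by decide)
    · -- positions 2 and 1 give `a (m + 1) = 1` and `m` even,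
      -- then 3 and 4 contradict on `a (m + 2)`
      have h1 := hper 1 (by omega)
      have h2 := hper 2 (by omega)
      have h3 := hper 3 (by omega)
      have h4 := hper 4 (by omega)
      rw [show 1 + (2 * m + 1) = 2 * (m + 1) by ring, aSeq_two_ten_even] at h1
      rw [show 2 + (2 * m + 1) = 2 * (m + 1) + 1 by ring, aSeq_two_ten_odd] at h2
      rw [show 3 + (2 * m + 1) = 2 * (m + 2) by ring, aSeq_two_ten_even] at h3
      rw [show 4 + (2 * m + 1) = 2 * (m + 2) + 1 by ring, aSeq_two_ten_odd] at h4
      have ha : aSeq 2 [1, 0] 1 = 0 ∧ aSeq 2 [1, 0] 2 = 1 ∧ aSeq 2 [1, 0] 3 = 0 ∧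
          aSeq 2 [1, 0] 4 = 1 := by decide
      have hlt : aSeq 2 [1, 0] (m + 2) < 2 := Nat.mod_lt _ two_pos
      omega

theorem IsPrefixSeq.apply_add_length_of_append_self {v : List ℕ} {s : ℕ → ℕ}
    (h : IsPrefixSeq (v ++ v) s) (n : ℕ) (hn : n < v.length) : s (n + v.length) = s n := by
  have hlen := List.length_append (as := v) (bs := v)
  rw [h n (by omega), h (n + v.length) (by omega), List.getD_append _ _ _ _ hn,
    List.getD_append_right _ _ _ _ (by omega), Nat.add_sub_cancel]

theorem IsMorphFixedPoint.isPrefixSeq_append {φ : ℕ → List ℕ} {s : ℕ → ℕ}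
    (h : IsMorphFixedPoint φ s) : IsPrefixSeq (φ (s 0) ++ φ (s 1)) s := by
  intro n hn
  rw [List.length_append] at hn
  by_cases hlt : n < (φ (s 0)).length
  · rw [List.getD_append _ _ _ _ hlt]
    simpa [morphPrefixLen] using h 0 n hlt
  · rw [List.getD_append_right _ _ _ _ (by omega)]
    simpa [morphPrefixLen, Nat.add_sub_cancel' (not_lt.mp hlt)] using
      h 1 (n - (φ (s 0)).length) (by omega)

theorem aSeq_two_ten_not_isPrefixSeq_append_self {v : List ℕ} (hv : 2 ≤ v.length) :
    ¬ IsPrefixSeq (v ++ v) (aSeq 2 [1, 0]) := fun h =>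
  aSeq_two_ten_not_periodic_prefix v.length hv fun n hn =>
    (h.apply_add_length_of_append_self n hn).symm

theorem stmt17 :
    (∀ v : List ℕ, v ≠ [] → IsPrefixSeq (v ++ v) (aSeq 2 [1, 0]) →
      v = [0] ∨ v = [0, 0]) ∧
    ¬ PurelyMorphic 2 (aSeq 2 [1, 0]) := by
  refine ⟨fun v hv hsq => Or.inl ?_, ?_⟩
  · obtain ⟨x, rfl⟩ : ∃ x, v = [x] := by
      refine List.length_eq_one_iff.mp (le_antisymm ?_ (List.length_pos_iff.mpr hv))
      by_contra! hlen
      exact aSeq_two_ten_not_isPrefixSeq_append_self hlen hsq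
    have h0 : aSeq 2 [1, 0] 0 = x := hsq 0 (by simp)
    rw [← h0]
    decide
  · rintro ⟨φ, -, hlen, hfix⟩
    have h10 : aSeq 2 [1, 0] 1 = aSeq 2 [1, 0] 0 := by decide
    exact aSeq_two_ten_not_isPrefixSeq_append_self hlen (h10 ▸ hfix.isPrefixSeq_append)
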